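/- Soundness theorem for FOLP□: for every constant specification CS, set of formulas Γ, and formula Φ, if Γ ⊢_CS Φ then Γ ⊨_CS Φ, i.e., for every Fitting model M meeting CS, every valuation ν, and every world w such that (M,ν),w ⊩ Γ and ν(FV(Φ)) ⊆ D_w, it holds that (M,ν),w ⊩ Φ. -/

import Mathlib

/-! # Syntax of FOLP□ -/

/-- Justification terms. -/
inductive JTerm : Type
  | jvar : ℕ → JTerm
  | jconst : ℕ → JTerm
  | app : JTerm → JTerm → JTerm
  | plus : JTerm → JTerm → JTerm
  | bang : JTerm → JTerm
  | gen : ℕ → JTerm → JTerm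
  deriving DecidableEq

/-- `gen`-indexes occurring in a justification term. -/
def JTerm.ivars : JTerm → Finset ℕ
  | .jvar _ => ∅
  | .jconst _ => ∅
  | .app t s => t.ivars ∪ s.ivars
  | .plus t s => t.ivars ∪ s.ivars
  | .bang t => t.ivars
  | .gen x t => insert x t.ivars

/-- Formulas of FOLP□ (individual variables are natural numbers). -/
inductive Fm : Type
  | atom : ℕ → List ℕ → Fm
  | neg : Fm → Fm
  | and : Fm → Fm → Fm
  | imp : Fm → Fm → Fm
  | iff : Fm → Fm → Fm
  | all : ℕ → Fm → Fm
  | box : Finset ℕ → Fm → Fm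
  | just : JTerm → Finset ℕ → Fm → Fm
  deriving DecidableEq

/-- Free individual variables. -/
def Fm.FV : Fm → Finset ℕ
  | .atom _ l => l.toFinset
  | .neg φ => φ.FV
  | .and φ ψ => φ.FV ∪ ψ.FV
  | .imp φ ψ => φ.FV ∪ ψ.FV
  | .iff φ ψ => φ.FV ∪ ψ.FV
  | .all x φ => φ.FV.erase x
  | .box X _ => X
  | .just _ X _ => X

/-- Variables with bound occurrences (including `gen` indexes). -/
def Fm.BV : Fm → Finset ℕ
  | .atom _ _ => ∅
  | .neg φ => φ.BV
  | .and φ ψ => φ.BV ∪ ψ.BV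
  | .imp φ ψ => φ.BV ∪ ψ.BV
  | .iff φ ψ => φ.BV ∪ ψ.BV
  | .all x φ => insert x φ.BV
  | .box X φ => (φ.FV \ X) ∪ φ.BV
  | .just t X φ => (φ.FV \ X) ∪ φ.BV ∪ t.ivars

/-- All variables occurring in a formula. -/
def Fm.vars : Fm → Finset ℕ
  | .atom _ l => l.toFinset
  | .neg φ => φ.vars
  | .and φ ψ => φ.vars ∪ ψ.vars
  | .imp φ ψ => φ.vars ∪ ψ.vars
  | .iff φ ψ => φ.vars ∪ ψ.vars
  | .all x φ => insert x φ.vars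
  | .box X φ => X ∪ φ.vars
  | .just t X φ => X ∪ φ.vars ∪ t.ivars

/-- Renaming of free individual variables. -/
def Fm.rename : (ℕ → ℕ) → Fm → Fm
  | σ, .atom P l => .atom P (l.map σ)
  | σ, .neg φ => .neg (φ.rename σ)
  | σ, .and φ ψ => .and (φ.rename σ) (ψ.rename σ)
  | σ, .imp φ ψ => .imp (φ.rename σ) (ψ.rename σ)
  | σ, .iff φ ψ => .iff (φ.rename σ) (ψ.rename σ)
  | σ, .all x φ => .all x (φ.rename (Function.update σ x x))
  | σ, .box X φ => .box (X.image σ) (φ.rename fun z => if z ∈ X then σ z else z)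
  | σ, .just t X φ => .just t (X.image σ) (φ.rename fun z => if z ∈ X then σ z else z)

/-- Substituting variable `v` for the free occurrences of `x`. -/
def Fm.subst1 (x v : ℕ) (φ : Fm) : Fm := φ.rename fun z => if z = x then v else z

/-- The renaming `σ` causes no collision (capture) of variables in `φ`. -/
def Admissible : (ℕ → ℕ) → Fm → Prop
  | _, .atom _ _ => True
  | σ, .neg φ => Admissible σ φ
  | σ, .and φ ψ => Admissible σ φ ∧ Admissible σ ψ
  | σ, .imp φ ψ => Admissible σ φ ∧ Admissible σ ψ
  | σ, .iff φ ψ => Admissible σ φ ∧ Admissible σ ψ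
  | σ, .all x φ => Admissible (Function.update σ x x) φ ∧ ∀ z ∈ (Fm.all x φ).FV, σ z ≠ x
  | σ, .box X φ => Admissible (fun z => if z ∈ X then σ z else z) φ ∧
      ∀ z ∈ X, σ z ∈ X ∨ σ z ∉ φ.FV
  | σ, .just _ X φ => Admissible (fun z => if z ∈ X then σ z else z) φ ∧
      ∀ z ∈ X, σ z ∈ X ∨ σ z ∉ φ.FV

/-- A fixed contradictory formula. -/
def FmBot : Fm := Fm.neg (Fm.imp (Fm.atom 0 []) (Fm.atom 0 []))

/-! # Axioms and derivability -/

/-- Axioms of FOLP□₀: classical first-order axioms (A0) together with (A1)–(A8)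
and (A1')–(A7'). -/
inductive FAxiom : Fm → Prop
  -- (A0) classical axioms of first-order logic
  | pK (φ ψ : Fm) : FAxiom (φ.imp (ψ.imp φ))
  | pS (φ ψ χ : Fm) : FAxiom ((φ.imp (ψ.imp χ)).imp ((φ.imp ψ).imp (φ.imp χ)))
  | pContra (φ ψ : Fm) : FAxiom ((φ.neg.imp ψ.neg).imp (ψ.imp φ))
  | andI (φ ψ : Fm) : FAxiom (φ.imp (ψ.imp (φ.and ψ)))
  | andE1 (φ ψ : Fm) : FAxiom ((φ.and ψ).imp φ)
  | andE2 (φ ψ : Fm) : FAxiom ((φ.and ψ).imp ψ)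
  | iffI (φ ψ : Fm) : FAxiom (((φ.imp ψ).and (ψ.imp φ)).imp (φ.iff ψ))
  | iffE1 (φ ψ : Fm) : FAxiom ((φ.iff ψ).imp (φ.imp ψ))
  | iffE2 (φ ψ : Fm) : FAxiom ((φ.iff ψ).imp (ψ.imp φ))
  | allE (x y : ℕ) (φ : Fm) : Admissible (fun z => if z = x then y else z) φ →
      FAxiom ((Fm.all x φ).imp (φ.subst1 x y))
  | allImp (x : ℕ) (φ ψ : Fm) :
      FAxiom ((Fm.all x (φ.imp ψ)).imp ((Fm.all x φ).imp (Fm.all x ψ)))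
  | allVac (x : ℕ) (φ : Fm) : x ∉ φ.FV → FAxiom (φ.imp (Fm.all x φ))
  -- (A1), (A1')
  | A1 (t : JTerm) (X : Finset ℕ) (y : ℕ) (φ : Fm) : y ∉ φ.FV →
      FAxiom ((Fm.just t (insert y X) φ).imp (Fm.just t X φ))
  | A1' (X : Finset ℕ) (y : ℕ) (φ : Fm) : y ∉ φ.FV →
      FAxiom ((Fm.box (insert y X) φ).imp (Fm.box X φ))
  -- (A2), (A2')
  | A2 (t : JTerm) (X : Finset ℕ) (y : ℕ) (φ : Fm) :
      FAxiom ((Fm.just t X φ).imp (Fm.just t (insert y X) φ))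
  | A2' (X : Finset ℕ) (y : ℕ) (φ : Fm) :
      FAxiom ((Fm.box X φ).imp (Fm.box (insert y X) φ))
  -- (A3), (A3')
  | A3 (t : JTerm) (X : Finset ℕ) (φ : Fm) : FAxiom ((Fm.just t X φ).imp φ)
  | A3' (X : Finset ℕ) (φ : Fm) : FAxiom ((Fm.box X φ).imp φ)
  -- (A4), (A4')
  | A4 (t s : JTerm) (X : Finset ℕ) (φ ψ : Fm) :
      FAxiom ((Fm.just t X (φ.imp ψ)).imp ((Fm.just s X φ).imp (Fm.just (t.app s) X ψ)))
  | A4' (X : Finset ℕ) (φ ψ : Fm) :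
      FAxiom ((Fm.box X (φ.imp ψ)).imp ((Fm.box X φ).imp (Fm.box X ψ)))
  -- (A5)
  | A5l (t s : JTerm) (X : Finset ℕ) (φ : Fm) :
      FAxiom ((Fm.just t X φ).imp (Fm.just (t.plus s) X φ))
  | A5r (t s : JTerm) (X : Finset ℕ) (φ : Fm) :
      FAxiom ((Fm.just s X φ).imp (Fm.just (t.plus s) X φ))
  -- (A6), (A6')
  | A6 (t : JTerm) (X : Finset ℕ) (φ : Fm) :
      FAxiom ((Fm.just t X φ).imp (Fm.just t.bang X (Fm.just t X φ)))
  | A6' (X : Finset ℕ) (φ : Fm) : FAxiom ((Fm.box X φ).imp (Fm.box X (Fm.box X φ)))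
  -- (A7), (A7')
  | A7 (t : JTerm) (X : Finset ℕ) (x : ℕ) (φ : Fm) : x ∉ X →
      FAxiom ((Fm.just t X φ).imp (Fm.just (JTerm.gen x t) X (Fm.all x φ)))
  | A7' (X : Finset ℕ) (x : ℕ) (φ : Fm) : x ∉ X →
      FAxiom ((Fm.box X φ).imp (Fm.box X (Fm.all x φ)))
  -- (A8)
  | A8 (t : JTerm) (X : Finset ℕ) (φ : Fm) :
      FAxiom ((Fm.just t X φ).imp (Fm.box X φ))

/-- `CS` is a constant specification: a set of formulas `c:_∅ Φ` with `Φ` an axiom. -/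
def IsCS (CS : Set Fm) : Prop :=
  ∀ φ ∈ CS, ∃ (c : ℕ) (ψ : Fm), φ = Fm.just (JTerm.jconst c) ∅ ψ ∧ FAxiom ψ

/-- Derivability from hypotheses `Γ` with constant specification `CS`; `V` is the
set of variables to which the generalization rule may *not* be applied (for the
extended language 𝓛(V), take `V` the set of added free variables; for the basic
language take `V = ∅`).  Generalization is applied only to variables not free in
the hypotheses, and necessitation only to theorems (equivalently, axioms). -/
inductive Deriv (CS : Set Fm) (V : Set ℕ) : Set Fm → Fm → Prop
  | hyp {Γ φ} : φ ∈ Γ → Deriv CS V Γ φ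
  | ax {Γ φ} : FAxiom φ → Deriv CS V Γ φ
  | cs {Γ φ} : φ ∈ CS → Deriv CS V Γ φ
  | mp {Γ φ ψ} : Deriv CS V Γ (φ.imp ψ) → Deriv CS V Γ φ → Deriv CS V Γ ψ
  | gen {Γ φ x} : x ∉ V → (∀ ψ ∈ Γ, x ∉ ψ.FV) → Deriv CS V Γ φ →
      Deriv CS V Γ (Fm.all x φ)
  | nec {Γ φ} : Deriv CS V ∅ φ → Deriv CS V Γ (Fm.box ∅ φ)

/-- A variant-closed constant specification. -/
def VariantClosed (CS : Set Fm) : Prop :=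
  ∀ (c : ℕ) (φ : Fm) (σ : ℕ → ℕ), Admissible σ φ →
    (Fm.just (JTerm.jconst c) ∅ φ ∈ CS ↔ Fm.just (JTerm.jconst c) ∅ (φ.rename σ) ∈ CS)

/-! # Fitting models -/

/-- Finite valuations of individual variables. -/
structure FinVal (Obj : Type) where
  dom : Finset ℕ
  val : ℕ → Obj

namespace FinVal

variable {Obj : Type}

/-- The image of a finite valuation. -/
def Im (f : FinVal Obj) : Set Obj := f.val '' ↑f.dom

/-- Restriction `f ↾ Y`. -/
def restrict (f : FinVal Obj) (Y : Finset ℕ) : FinVal Obj := ⟨f.dom ∩ Y, f.val⟩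

/-- `g` is an extension of `f`. -/
def Ext (f g : FinVal Obj) : Prop := f.dom ⊆ g.dom ∧ ∀ x ∈ f.dom, g.val x = f.val x

/-- Composition `f ∘ σ` of `f` with a substitution `σ` defined on `X`. -/
def comp (f : FinVal Obj) (σ : ℕ → ℕ) (X : Finset ℕ) : FinVal Obj :=
  ⟨X.filter fun x => σ x ∈ f.dom, f.val ∘ σ⟩

/-- The finite valuation obtained by restricting `ν` to a finite `X`. -/
def ofFun (ν : ℕ → Obj) (X : Finset ℕ) : FinVal Obj := ⟨X, ν⟩

end FinVal

/-- The data of a Fitting model (conditions are imposed by `IsFitting`). -/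
structure PreModel (Obj : Type) where
  W : Type
  R : W → W → Prop
  D : W → Set Obj
  I : ℕ → W → Set (List Obj)
  E : JTerm → Fm → FinVal Obj → Set W

/-- Truth at a world of a pre-model, under a (total) valuation. -/
def Sat {Obj : Type} (M : PreModel Obj) : Fm → (ℕ → Obj) → M.W → Prop
  | .atom P l, ν, w => l.map ν ∈ M.I P w
  | .neg φ, ν, w => (∀ x ∈ φ.FV, ν x ∈ M.D w) ∧ ¬ Sat M φ ν w
  | .and φ ψ, ν, w => Sat M φ ν w ∧ Sat M ψ ν w
  | .imp φ ψ, ν, w => (∀ x ∈ φ.FV ∪ ψ.FV, ν x ∈ M.D w) ∧ (Sat M φ ν w → Sat M ψ ν w)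
  | .iff φ ψ, ν, w => (∀ x ∈ φ.FV ∪ ψ.FV, ν x ∈ M.D w) ∧ (Sat M φ ν w ↔ Sat M ψ ν w)
  | .all x φ, ν, w => ∀ a ∈ M.D w, Sat M φ (Function.update ν x a) w
  | .box X φ, ν, w =>
      (∀ x ∈ X, ν x ∈ M.D w) ∧
      ∀ u, M.R w u → ∀ μ : ℕ → Obj, (∀ x, x ∉ φ.FV \ X → μ x = ν x) →
        (∀ x ∈ φ.FV \ X, μ x ∈ M.D u) → Sat M φ μ u
  | .just t X φ, ν, w =>
      (∀ x ∈ X, ν x ∈ M.D w) ∧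
      (∀ u, M.R w u → ∀ μ : ℕ → Obj, (∀ x, x ∉ φ.FV \ X → μ x = ν x) →
        (∀ x ∈ φ.FV \ X, μ x ∈ M.D u) → Sat M φ μ u) ∧
      w ∈ M.E t φ (FinVal.ofFun ν (φ.FV ∩ X))

/-- The conditions on an evidence function. -/
def EvidenceOK {Obj : Type} (M : PreModel Obj) : Prop :=
  -- adequacy
  (∀ t φ f w, w ∈ M.E t φ f → ∀ x ∈ f.dom, f.val x ∈ M.D w) ∧
  -- substitution
  (∀ t φ (σ : ℕ → ℕ) (f : FinVal Obj), Admissible σ φ →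
      M.E t (φ.rename σ) (f.restrict (φ.rename σ).FV) = M.E t φ (f.comp σ φ.FV)) ∧
  -- R-closure
  (∀ t φ f w u, M.R w u → w ∈ M.E t φ f → u ∈ M.E t φ f) ∧
  -- extension
  (∀ t φ f g w, w ∈ M.E t φ f → FinVal.Ext f g → g.Im ⊆ M.D w → w ∈ M.E t φ g) ∧
  -- restriction
  (∀ t φ f, M.E t φ f ⊆ M.E t φ (f.restrict φ.FV)) ∧
  -- · condition
  (∀ t s φ ψ f, M.E t (φ.imp ψ) f ∩ M.E s φ f ⊆ M.E (t.app s) ψ f) ∧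
  -- + condition
  (∀ t s φ f, M.E t φ f ∪ M.E s φ f ⊆ M.E (t.plus s) φ f) ∧
  -- ! condition
  (∀ t φ f g (X : Finset ℕ) w, w ∈ M.E t φ f → FinVal.Ext f g → g.Im ⊆ M.D w →
      f.dom ∩ φ.FV ⊆ X → X ⊆ g.dom → w ∈ M.E t.bang (Fm.just t X φ) g) ∧
  -- gen_x condition
  (∀ t φ f (x : ℕ), x ∉ f.dom ∩ φ.FV → M.E t φ f ⊆ M.E (JTerm.gen x t) (Fm.all x φ) f)

/-- A Fitting model: reflexive transitive frame, monotone nonempty domains,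
adequate interpretation, evidence function satisfying all conditions. -/
def IsFitting {Obj : Type} (M : PreModel Obj) : Prop :=
  Nonempty M.W ∧
  (∀ w, M.R w w) ∧
  (∀ w u v, M.R w u → M.R u v → M.R w v) ∧
  (∀ w, (M.D w).Nonempty) ∧
  (∀ w u, M.R w u → M.D w ⊆ M.D u) ∧
  (∀ P w l, l ∈ M.I P w → ∀ a ∈ l, a ∈ M.D w) ∧
  EvidenceOK M

/-- The model meets the constant specification `CS`. -/
def MeetsCS {Obj : Type} (M : PreModel Obj) (CS : Set Fm) : Prop :=
  ∀ (c : ℕ) (φ : Fm), Fm.just (JTerm.jconst c) ∅ φ ∈ CS →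
    ∀ f : FinVal Obj, f.dom = ∅ → M.E (JTerm.jconst c) φ f = Set.univ

/-- `Φ` is true in the model `M`. -/
def TrueIn {Obj : Type} (M : PreModel Obj) (φ : Fm) : Prop :=
  ∀ (ν : ℕ → Obj) (w : M.W), (∀ x ∈ φ.FV, ν x ∈ M.D w) → Sat M φ ν w

/-! # The canonical model -/

/-- The original individual variables `Var` (even numbers). -/
def VarBase : Set ℕ := {n | Even n}

/-- The additional variables `Var⁺` (odd numbers). -/
def VarPlus : Set ℕ := {n | ¬ Even n}

/-- A `V`-closed formula: all occurrences of variables from `V` are free,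
all occurrences of variables from `Var` are bound, and `V`-variables do not
occur as `gen` indexes. -/
def Vclosed (V : Set ℕ) (φ : Fm) : Prop :=
  (↑φ.FV ⊆ V) ∧ ∀ x ∈ φ.BV, x ∉ V

/-- The universal closure `∀ y₁ … ∀ yₙ Φ` over the `Var`-variables free in `Φ`. -/
def allClosure (φ : Fm) : Fm :=
  ((φ.FV.filter fun n => Even n).sort (· ≤ ·)).foldr Fm.all φ

/-- `S^#`: the universal closures of the `□`-prefixed members of `S`. -/
def sharpOf (S : Set Fm) : Set Fm :=
  {ψ | ∃ (X : Finset ℕ) (φ : Fm), Fm.box X φ ∈ S ∧ ψ = allClosure φ}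

/-- A world of the canonical model: a pair `(S, V)` with `S` an
`𝓛ʰ(V)`-maximal, `𝓛(V)`-consistent (using `CS`), `∃`-complete set of
`V`-closed formulas. -/
structure CWorld (CS : Set Fm) where
  V : Set ℕ
  S : Set Fm
  hV : V ⊆ VarPlus
  hVinf : V.Infinite
  hVcoinf : (VarPlus \ V).Infinite
  hclosed : ∀ φ ∈ S, Vclosed V φ
  hmax : ∀ φ, Vclosed V φ → φ ∈ S ∨ Fm.neg φ ∈ S
  hcons : ¬ Deriv CS V S FmBot
  hex : ∀ (x : ℕ) (φ : Fm), Fm.neg (Fm.all x φ) ∈ S → ∃ v ∈ V, Fm.neg (φ.subst1 x v) ∈ S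

/-- The canonical accessibility relation. -/
def Rc {CS : Set Fm} (Γ Δ : CWorld CS) : Prop := Γ.V ⊆ Δ.V ∧ sharpOf Γ.S ⊆ Δ.S

/-- Applying a finite valuation (into variables) to a formula. -/
def applyVal (f : FinVal ℕ) (φ : Fm) : Fm :=
  φ.rename fun x => if x ∈ f.dom then f.val x else x

/-- The canonical evidence function. -/
def canE (CS : Set Fm) : JTerm → Fm → FinVal ℕ → Set (CWorld CS) :=
  fun t φ f => {Γ | f.Im ⊆ Γ.V ∧ applyVal f (Fm.just t (f.dom ∩ φ.FV) φ) ∈ Γ.S}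

/-- The canonical (pre-)model. -/
def canPre (CS : Set Fm) : PreModel ℕ where
  W := CWorld CS
  R := Rc
  D := fun Γ => Γ.V
  I := fun P Γ => {l | Fm.atom P l ∈ Γ.S}
  E := canE CS

/-- A canonical valuation: the identity on `Var⁺`. -/
def CanonicalVal (ν : ℕ → ℕ) : Prop := ∀ x ∈ VarPlus, ν x = x

/-- Simultaneous renaming determined by two lists (`ys ↦ vs`). -/
def renList (ys vs : List ℕ) : ℕ → ℕ :=
  fun z => ((ys.zip vs).lookup z).getD z

section SoundnessAux

variable {Obj : Type} {M : PreModel Obj}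

lemma fv_rename : ∀ (φ : Fm) (σ : ℕ → ℕ), Admissible σ φ →
    (φ.rename σ).FV = φ.FV.image σ
  | .atom P l, σ, _ => by ext a; simp [Fm.rename, Fm.FV]
  | .neg φ, σ, h => fv_rename φ σ h
  | .and φ ψ, σ, h => by
      simp [Fm.rename, Fm.FV, fv_rename φ σ h.1, fv_rename ψ σ h.2, Finset.image_union]
  | .imp φ ψ, σ, h => by
      simp [Fm.rename, Fm.FV, fv_rename φ σ h.1, fv_rename ψ σ h.2, Finset.image_union]
  | .iff φ ψ, σ, h => by
      simp [Fm.rename, Fm.FV, fv_rename φ σ h.1, fv_rename ψ σ h.2, Finset.image_union]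
  | .all x φ, σ, h => by
      have hfv := fv_rename φ _ h.1
      show ((φ.rename (Function.update σ x x)).FV).erase x = (φ.FV.erase x).image σ
      rw [hfv]
      ext y
      simp only [Finset.mem_erase, Finset.mem_image]
      constructor
      · rintro ⟨hyx, z, hz, hzy⟩
        by_cases hzx : z = x
        · subst hzx; simp [Function.update_self] at hzy; exact absurd hzy.symm hyx
        · rw [Function.update_of_ne hzx] at hzy
          exact ⟨z, ⟨hzx, hz⟩, hzy⟩
      · rintro ⟨z, ⟨hzx, hz⟩, rfl⟩
        refine ⟨h.2 z (Finset.mem_erase.2 ⟨hzx, hz⟩), z, hz, ?_⟩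
        rw [Function.update_of_ne hzx]
  | .box X φ, σ, _ => rfl
  | .just t X φ, σ, _ => rfl

lemma sat_fv (hM : IsFitting M) : ∀ (φ : Fm) (ν : ℕ → Obj) (w : M.W),
    Sat M φ ν w → ∀ x ∈ φ.FV, ν x ∈ M.D w
  | .atom P l, ν, w, h, x, hx => by
      exact hM.2.2.2.2.2.1 P w _ h (ν x)
        (List.mem_map_of_mem (f := ν) (List.mem_toFinset.1 hx))
  | .neg φ, ν, w, h, x, hx => h.1 x hx
  | .and φ ψ, ν, w, h, x, hx => by
      rcases Finset.mem_union.1 hx with hx | hx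
      · exact sat_fv hM φ ν w h.1 x hx
      · exact sat_fv hM ψ ν w h.2 x hx
  | .imp φ ψ, ν, w, h, x, hx => h.1 x hx
  | .iff φ ψ, ν, w, h, x, hx => h.1 x hx
  | .all y φ, ν, w, h, x, hx => by
      obtain ⟨a, ha⟩ := hM.2.2.2.1 w
      have hx' := Finset.mem_erase.1 hx
      have := sat_fv hM φ _ w (h a ha) x hx'.2
      rwa [Function.update_of_ne hx'.1] at this
  | .box X φ, ν, w, h, x, hx => h.1 x hx
  | .just t X φ, ν, w, h, x, hx => h.1 x hx

lemma evid_mono (hM : IsFitting M) {t : JTerm} {φ : Fm} {f g : FinVal Obj} {w : M.W}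
    (hw : w ∈ M.E t φ f) (hdom : f.dom ⊆ g.dom) (hval : ∀ x ∈ f.dom, g.val x = f.val x)
    (hD : ∀ x ∈ g.dom, g.val x ∈ M.D w) : w ∈ M.E t φ g := by
  refine hM.2.2.2.2.2.2.2.2.2.1 t φ f g w hw ⟨hdom, hval⟩ ?_
  rintro _ ⟨x, hx, rfl⟩
  exact hD x (by exact_mod_cast hx)

lemma evid_congr (hM : IsFitting M) {t : JTerm} {φ : Fm} {f g : FinVal Obj} {w : M.W}
    (hdom : f.dom = g.dom) (hval : ∀ x ∈ f.dom, f.val x = g.val x) :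
    w ∈ M.E t φ f ↔ w ∈ M.E t φ g := by
  have hadq := hM.2.2.2.2.2.2.1
  constructor
  · intro hw
    exact evid_mono hM hw (le_of_eq hdom) (fun x hx => (hval x (hdom ▸ hx)).symm)
      (fun x hx => (hval x (hdom ▸ hx)) ▸ hadq t φ f w hw x (hdom ▸ hx))
  · intro hw
    exact evid_mono hM hw (le_of_eq hdom.symm) (fun x hx => (hval x (by rw [hdom]; exact hx)))
      (fun x hx => (hval x hx).symm ▸ hadq t φ g w hw x (by rw [← hdom]; exact hx))

lemma sat_agree (hM : IsFitting M) : ∀ (φ : Fm) {μ ν : ℕ → Obj} {w : M.W},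
    (∀ x ∈ φ.FV, μ x = ν x) → Sat M φ μ w → Sat M φ ν w
  | .atom P l, μ, ν, w, hag, h => by
      show List.map ν l ∈ _
      have : List.map μ l = List.map ν l :=
        List.map_congr_left fun a ha => hag a (List.mem_toFinset.2 ha)
      rwa [← this]
  | .neg φ, μ, ν, w, hag, h =>
      ⟨fun x hx => hag x hx ▸ h.1 x hx,
       fun hν => h.2 (sat_agree hM φ (fun x hx => (hag x hx).symm) hν)⟩
  | .and φ ψ, μ, ν, w, hag, h =>
      ⟨sat_agree hM φ (fun x hx => hag x (Finset.mem_union_left _ hx)) h.1,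
       sat_agree hM ψ (fun x hx => hag x (Finset.mem_union_right _ hx)) h.2⟩
  | .imp φ ψ, μ, ν, w, hag, h =>
      ⟨fun x hx => hag x hx ▸ h.1 x hx,
       fun hν => sat_agree hM ψ (fun x hx => hag x (Finset.mem_union_right _ hx))
        (h.2 (sat_agree hM φ (fun x hx => (hag x (Finset.mem_union_left _ hx)).symm) hν))⟩
  | .iff φ ψ, μ, ν, w, hag, h =>
      ⟨fun x hx => hag x hx ▸ h.1 x hx,
       ⟨fun hν => sat_agree hM ψ (fun x hx => hag x (Finset.mem_union_right _ hx))
          (h.2.1 (sat_agree hM φ (fun x hx => (hag x (Finset.mem_union_left _ hx)).symm) hν)),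
        fun hν => sat_agree hM φ (fun x hx => hag x (Finset.mem_union_left _ hx))
          (h.2.2 (sat_agree hM ψ (fun x hx => (hag x (Finset.mem_union_right _ hx)).symm) hν))⟩⟩
  | .all y φ, μ, ν, w, hag, h => fun a ha => by
      refine sat_agree hM φ (μ := Function.update μ y a) ?_ (h a ha)
      intro z hz
      by_cases hzy : z = y
      · subst hzy; simp [Function.update_self]
      · rw [Function.update_of_ne hzy, Function.update_of_ne hzy]
        exact hag z (Finset.mem_erase.2 ⟨hzy, hz⟩)
  | .box X φ, μ, ν, w, hag, h => by
      refine ⟨fun x hx => hag x hx ▸ h.1 x hx, ?_⟩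
      intro u hu ρ hρ hρD
      have hs : Sat M φ (fun z => if z ∈ φ.FV \ X then ρ z else μ z) u :=
        h.2 u hu _ (fun z hz => if_neg hz)
          (fun z hz => by show (if z ∈ φ.FV \ X then ρ z else μ z) ∈ M.D u
                          rw [if_pos hz]; exact hρD z hz)
      refine sat_agree hM φ ?_ hs
      intro z hz
      show (if z ∈ φ.FV \ X then ρ z else μ z) = ρ z
      by_cases hzX : z ∈ φ.FV \ X
      · rw [if_pos hzX]
      · have hzX' : z ∈ X := by
          by_contra hc
          exact hzX (Finset.mem_sdiff.2 ⟨hz, hc⟩)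
        rw [if_neg hzX, hag z hzX', hρ z hzX]
  | .just t X φ, μ, ν, w, hag, h => by
      refine ⟨fun x hx => hag x hx ▸ h.1 x hx, ?_, ?_⟩
      · intro u hu ρ hρ hρD
        have hs : Sat M φ (fun z => if z ∈ φ.FV \ X then ρ z else μ z) u :=
          h.2.1 u hu _ (fun z hz => if_neg hz)
            (fun z hz => by show (if z ∈ φ.FV \ X then ρ z else μ z) ∈ M.D u
                            rw [if_pos hz]; exact hρD z hz)
        refine sat_agree hM φ ?_ hs
        intro z hz
        show (if z ∈ φ.FV \ X then ρ z else μ z) = ρ z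
        by_cases hzX : z ∈ φ.FV \ X
        · rw [if_pos hzX]
        · have hzX' : z ∈ X := by
            by_contra hc
            exact hzX (Finset.mem_sdiff.2 ⟨hz, hc⟩)
          rw [if_neg hzX, hag z hzX', hρ z hzX]
      · refine (evid_congr hM (f := FinVal.ofFun μ (φ.FV ∩ X))
          (g := FinVal.ofFun ν (φ.FV ∩ X)) rfl ?_).1 h.2.2
        intro x hx
        exact hag x (Finset.mem_inter.1 hx).2

lemma box_fv_key {X : Finset ℕ} {φ : Fm} {σ : ℕ → ℕ}
    (hadm : Admissible (fun z => if z ∈ X then σ z else z) φ)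
    (hside : ∀ z ∈ X, σ z ∈ X ∨ σ z ∉ φ.FV) :
    (φ.rename (fun z => if z ∈ X then σ z else z)).FV \ X.image σ = φ.FV \ X := by
  rw [fv_rename φ _ hadm]
  ext y
  simp only [Finset.mem_sdiff, Finset.mem_image]
  constructor
  · rintro ⟨⟨z, hz, rfl⟩, hni⟩
    by_cases hzX : z ∈ X
    · exact absurd ⟨z, hzX, (if_pos hzX).symm⟩ hni
    · rw [if_neg hzX]
      exact ⟨hz, hzX⟩
  · rintro ⟨hy, hyX⟩
    refine ⟨⟨y, hy, if_neg hyX⟩, ?_⟩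
    rintro ⟨x, hx, rfl⟩
    rcases hside x hx with h | h
    · exact hyX h
    · exact h hy

lemma box_sigma_key {X : Finset ℕ} {φ : Fm} {σ : ℕ → ℕ}
    (hside : ∀ z ∈ X, σ z ∈ X ∨ σ z ∉ φ.FV) :
    ∀ z ∈ X, σ z ∉ φ.FV \ X := by
  intro z hz hc
  rcases Finset.mem_sdiff.1 hc with ⟨h1, h2⟩
  rcases hside z hz with h | h
  · exact h2 h
  · exact h h1

lemma sat_rename (hM : IsFitting M) : ∀ (φ : Fm) (σ : ℕ → ℕ) (μ : ℕ → Obj) (w : M.W),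
    Admissible σ φ → (Sat M (φ.rename σ) μ w ↔ Sat M φ (μ ∘ σ) w)
  | .atom P l, σ, μ, w, _ => by
      show List.map μ (l.map σ) ∈ _ ↔ List.map (μ ∘ σ) l ∈ _
      rw [List.map_map]
  | .neg φ, σ, μ, w, h => by
      simp only [Fm.rename, Sat, Fm.FV, fv_rename φ σ h, sat_rename hM φ σ μ w h,
        Finset.forall_mem_image, Function.comp_apply]
  | .and φ ψ, σ, μ, w, h => by
      simp only [Fm.rename, Sat, sat_rename hM φ σ μ w h.1, sat_rename hM ψ σ μ w h.2]
  | .imp φ ψ, σ, μ, w, h => by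
      simp only [Fm.rename, Sat, Fm.FV, fv_rename φ σ h.1, fv_rename ψ σ h.2,
        sat_rename hM φ σ μ w h.1, sat_rename hM ψ σ μ w h.2, ← Finset.image_union,
        Finset.forall_mem_image, Function.comp_apply]
  | .iff φ ψ, σ, μ, w, h => by
      simp only [Fm.rename, Sat, Fm.FV, fv_rename φ σ h.1, fv_rename ψ σ h.2,
        sat_rename hM φ σ μ w h.1, sat_rename hM ψ σ μ w h.2, ← Finset.image_union,
        Finset.forall_mem_image, Function.comp_apply]
  | .all x φ, σ, μ, w, h => by
      show (∀ a ∈ M.D w, Sat M (φ.rename (Function.update σ x x)) (Function.update μ x a) w) ↔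
        (∀ a ∈ M.D w, Sat M φ (Function.update (μ ∘ σ) x a) w)
      have key : ∀ (a : Obj), ∀ z ∈ φ.FV,
          ((Function.update μ x a) ∘ (Function.update σ x x)) z =
            (Function.update (μ ∘ σ) x a) z := by
        intro a z hz
        by_cases hzx : z = x
        · subst hzx
          rw [Function.comp_apply, Function.update_self, Function.update_self, Function.update_self]
        · rw [Function.comp_apply, Function.update_of_ne hzx, Function.update_of_ne hzx,
            Function.update_of_ne (h.2 z (Finset.mem_erase.2 ⟨hzx, hz⟩)), Function.comp_apply]
      constructor
      · intro hs a ha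
        exact sat_agree hM φ (key a)
          ((sat_rename hM φ (Function.update σ x x) (Function.update μ x a) w h.1).1 (hs a ha))
      · intro hs a ha
        refine (sat_rename hM φ (Function.update σ x x) (Function.update μ x a) w h.1).2 ?_
        exact sat_agree hM φ (fun z hz => (key a z hz).symm) (hs a ha)
  | .box X φ, σ, μ, w, h => by
      show ((∀ y ∈ X.image σ, μ y ∈ M.D w) ∧ _) ↔ ((∀ z ∈ X, (μ ∘ σ) z ∈ M.D w) ∧ _)
      rw [box_fv_key h.1 h.2]
      set σ' : ℕ → ℕ := fun z => if z ∈ X then σ z else z with hσ'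
      have hBkey := box_sigma_key (φ := φ) (σ := σ) h.2
      constructor
      · rintro ⟨h1, h2⟩
        refine ⟨fun z hz => h1 _ (Finset.mem_image_of_mem σ hz), ?_⟩
        intro u hu ρ' hρ' hρ'D
        have hs : Sat M (φ.rename σ') (fun z => if z ∈ φ.FV \ X then ρ' z else μ z) u :=
          h2 u hu _ (fun z hz => if_neg hz)
            (fun z hz => by show (if z ∈ φ.FV \ X then ρ' z else μ z) ∈ M.D u
                            rw [if_pos hz]; exact hρ'D z hz)
        have hs2 := (sat_rename hM φ σ' _ u h.1).1 hs
        refine sat_agree hM φ ?_ hs2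
        intro z hz
        by_cases hzX : z ∈ X
        · show (if (if z ∈ X then σ z else z) ∈ φ.FV \ X then _ else _) = ρ' z
          rw [if_pos hzX, if_neg (hBkey z hzX),
            hρ' z (fun hc => (Finset.mem_sdiff.1 hc).2 hzX)]
          simp [hσ', hzX]
        · have hzS : z ∈ φ.FV \ X := Finset.mem_sdiff.2 ⟨hz, hzX⟩
          show (if (if z ∈ X then σ z else z) ∈ φ.FV \ X then ρ' _ else _) = ρ' z
          rw [if_neg hzX, if_pos hzS]
          simp [hσ', hzX]
      · rintro ⟨h1, h2⟩
        constructor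
        · intro y hy
          rcases Finset.mem_image.1 hy with ⟨z, hz, rfl⟩
          exact h1 z hz
        · intro u hu ρ hρ hρD
          have hs : Sat M φ (fun z => if z ∈ φ.FV \ X then ρ z else μ (σ z)) u :=
            h2 u hu _ (fun z hz => if_neg hz)
              (fun z hz => by show (if z ∈ φ.FV \ X then ρ z else μ (σ z)) ∈ M.D u
                              rw [if_pos hz]; exact hρD z hz)
          refine (sat_rename hM φ σ' ρ u h.1).2 (sat_agree hM φ ?_ hs)
          intro z hz
          by_cases hzX : z ∈ X
          · show (if z ∈ φ.FV \ X then ρ z else μ (σ z)) = ρ (if z ∈ X then σ z else z)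
            rw [if_neg (fun hc => (Finset.mem_sdiff.1 hc).2 hzX), if_pos hzX,
              hρ (σ z) (hBkey z hzX)]
          · have hzS : z ∈ φ.FV \ X := Finset.mem_sdiff.2 ⟨hz, hzX⟩
            show (if z ∈ φ.FV \ X then ρ z else μ (σ z)) = ρ (if z ∈ X then σ z else z)
            rw [if_pos hzS, if_neg hzX]
  | .just t X φ, σ, μ, w, h => by
      show ((∀ y ∈ X.image σ, μ y ∈ M.D w) ∧ _ ∧ _) ↔ ((∀ z ∈ X, (μ ∘ σ) z ∈ M.D w) ∧ _ ∧ _)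
      rw [box_fv_key h.1 h.2]
      set σ' : ℕ → ℕ := fun z => if z ∈ X then σ z else z with hσ'
      have hBkey := box_sigma_key (φ := φ) (σ := σ) h.2
      have hEv : w ∈ M.E t (φ.rename σ')
            (FinVal.ofFun μ ((φ.rename σ').FV ∩ X.image σ)) ↔
          w ∈ M.E t φ (FinVal.ofFun (μ ∘ σ) (φ.FV ∩ X)) := by
        have hsub := hM.2.2.2.2.2.2.2.1 t φ σ' (FinVal.ofFun μ (X.image σ)) h.1
        have e1 : w ∈ M.E t (φ.rename σ') (FinVal.ofFun μ ((φ.rename σ').FV ∩ X.image σ)) ↔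
            w ∈ M.E t (φ.rename σ')
              ((FinVal.ofFun μ (X.image σ)).restrict (φ.rename σ').FV) :=
          evid_congr hM (Finset.inter_comm _ _) (fun _ _ => rfl)
        have hdomeq : ((FinVal.ofFun μ (X.image σ)).comp σ' φ.FV).dom =
            (FinVal.ofFun (μ ∘ σ) (φ.FV ∩ X)).dom := by
          show φ.FV.filter (fun z => σ' z ∈ X.image σ) = φ.FV ∩ X
          ext y
          simp only [Finset.mem_filter, Finset.mem_inter]
          constructor
          · rintro ⟨hy, hy2⟩
            refine ⟨hy, ?_⟩
            by_contra hyX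
            rw [hσ'] at hy2
            simp only [if_neg hyX] at hy2
            rcases Finset.mem_image.1 hy2 with ⟨z, hz, hzy⟩
            rcases h.2 z hz with hc | hc
            · exact hyX (hzy ▸ hc)
            · exact hc (hzy ▸ hy)
          · rintro ⟨hy, hyX⟩
            refine ⟨hy, ?_⟩
            show (if y ∈ X then σ y else y) ∈ X.image σ
            rw [if_pos hyX]
            exact Finset.mem_image_of_mem σ hyX
        have e2 : w ∈ M.E t φ ((FinVal.ofFun μ (X.image σ)).comp σ' φ.FV) ↔
            w ∈ M.E t φ (FinVal.ofFun (μ ∘ σ) (φ.FV ∩ X)) := by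
          refine evid_congr hM hdomeq ?_
          intro x hx
          have hx' : x ∈ φ.FV ∩ X := by rw [hdomeq] at hx; exact hx
          show μ (σ' x) = μ (σ x)
          rw [hσ']
          simp only [if_pos (Finset.mem_inter.1 hx').2]
        rw [e1, hsub, e2]
      constructor
      · rintro ⟨h1, h2, h3⟩
        refine ⟨fun z hz => h1 _ (Finset.mem_image_of_mem σ hz), ?_, hEv.1 h3⟩
        intro u hu ρ' hρ' hρ'D
        have hs : Sat M (φ.rename σ') (fun z => if z ∈ φ.FV \ X then ρ' z else μ z) u :=
          h2 u hu _ (fun z hz => if_neg hz)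
            (fun z hz => by show (if z ∈ φ.FV \ X then ρ' z else μ z) ∈ M.D u
                            rw [if_pos hz]; exact hρ'D z hz)
        have hs2 := (sat_rename hM φ σ' _ u h.1).1 hs
        refine sat_agree hM φ ?_ hs2
        intro z hz
        by_cases hzX : z ∈ X
        · show (if (if z ∈ X then σ z else z) ∈ φ.FV \ X then _ else _) = ρ' z
          rw [if_pos hzX, if_neg (hBkey z hzX),
            hρ' z (fun hc => (Finset.mem_sdiff.1 hc).2 hzX)]
          simp [hσ', hzX]
        · have hzS : z ∈ φ.FV \ X := Finset.mem_sdiff.2 ⟨hz, hzX⟩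
          show (if (if z ∈ X then σ z else z) ∈ φ.FV \ X then ρ' _ else _) = ρ' z
          rw [if_neg hzX, if_pos hzS]
          simp [hσ', hzX]
      · rintro ⟨h1, h2, h3⟩
        refine ⟨?_, ?_, hEv.2 h3⟩
        · intro y hy
          rcases Finset.mem_image.1 hy with ⟨z, hz, rfl⟩
          exact h1 z hz
        · intro u hu ρ hρ hρD
          have hs : Sat M φ (fun z => if z ∈ φ.FV \ X then ρ z else μ (σ z)) u :=
            h2 u hu _ (fun z hz => if_neg hz)
              (fun z hz => by show (if z ∈ φ.FV \ X then ρ z else μ (σ z)) ∈ M.D u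
                              rw [if_pos hz]; exact hρD z hz)
          refine (sat_rename hM φ σ' ρ u h.1).2 (sat_agree hM φ ?_ hs)
          intro z hz
          by_cases hzX : z ∈ X
          · show (if z ∈ φ.FV \ X then ρ z else μ (σ z)) = ρ (if z ∈ X then σ z else z)
            rw [if_neg (fun hc => (Finset.mem_sdiff.1 hc).2 hzX), if_pos hzX,
              hρ (σ z) (hBkey z hzX)]
          · have hzS : z ∈ φ.FV \ X := Finset.mem_sdiff.2 ⟨hz, hzX⟩
            show (if z ∈ φ.FV \ X then ρ z else μ (σ z)) = ρ (if z ∈ X then σ z else z)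
            rw [if_pos hzS, if_neg hzX]

lemma axiom_sound (hM : IsFitting M) {φAx : Fm} (hax : FAxiom φAx) :
    ∀ (ν : ℕ → Obj) (w : M.W), (∀ x ∈ φAx.FV, ν x ∈ M.D w) → Sat M φAx ν w := by
  have hrefl := hM.2.1
  have htrans := hM.2.2.1
  have hDne := hM.2.2.2.1
  have hmono := hM.2.2.2.2.1
  have hE := hM.2.2.2.2.2.2
  have hadq := hE.1
  have hRcl := hE.2.2.1
  have happ := hE.2.2.2.2.2.1
  have hplus := hE.2.2.2.2.2.2.1
  have hbang := hE.2.2.2.2.2.2.2.1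
  have hgen := hE.2.2.2.2.2.2.2.2
  intro ν w hFV
  cases hax with
  | pK φ ψ =>
      exact ⟨hFV, fun hφ =>
        ⟨fun x hx => hFV x (by simp only [Fm.FV, Finset.mem_union] at hx ⊢; tauto),
         fun _ => hφ⟩⟩
  | pS φ ψ χ =>
      refine ⟨hFV, fun h1 => ⟨fun x hx => hFV x ?_, fun h2 =>
        ⟨fun x hx => hFV x ?_, fun hφ => (h1.2 hφ).2 (h2.2 hφ)⟩⟩⟩ <;>
      · simp only [Fm.FV, Finset.mem_union] at hx ⊢; tauto
  | pContra φ ψ =>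
      refine ⟨hFV, fun h1 => ⟨fun x hx => hFV x ?_, fun hψ => ?_⟩⟩
      · simp only [Fm.FV, Finset.mem_union] at hx ⊢; tauto
      · by_contra hnφ
        have hnegφ : Sat M φ.neg ν w :=
          ⟨fun x hx => hFV x (by simp only [Fm.FV, Finset.mem_union] at hx ⊢; tauto), hnφ⟩
        exact (h1.2 hnegφ).2 hψ
  | andI φ ψ =>
      refine ⟨hFV, fun hφ => ⟨fun x hx => hFV x ?_, fun hψ => ⟨hφ, hψ⟩⟩⟩
      simp only [Fm.FV, Finset.mem_union] at hx ⊢; tauto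
  | andE1 φ ψ => exact ⟨hFV, fun h => h.1⟩
  | andE2 φ ψ => exact ⟨hFV, fun h => h.2⟩
  | iffI φ ψ =>
      refine ⟨hFV, fun h => ⟨fun x hx => hFV x ?_, ⟨fun hφ => h.1.2 hφ, fun hψ => h.2.2 hψ⟩⟩⟩
      simp only [Fm.FV, Finset.mem_union] at hx ⊢; tauto
  | iffE1 φ ψ =>
      refine ⟨hFV, fun h => ⟨fun x hx => hFV x ?_, fun hφ => h.2.1 hφ⟩⟩
      simp only [Fm.FV, Finset.mem_union] at hx ⊢; tauto
  | iffE2 φ ψ =>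
      refine ⟨hFV, fun h => ⟨fun x hx => hFV x ?_, fun hψ => h.2.2 hψ⟩⟩
      simp only [Fm.FV, Finset.mem_union] at hx ⊢; tauto
  | allE x y φ hadm =>
      refine ⟨hFV, fun hall => ?_⟩
      refine (sat_rename hM φ _ ν w hadm).2 ?_
      by_cases hx : x ∈ φ.FV
      · have hy : ν y ∈ M.D w := by
          refine hFV y (Finset.mem_union_right _ ?_)
          show y ∈ (φ.subst1 x y).FV
          rw [Fm.subst1, fv_rename φ _ hadm]
          exact Finset.mem_image.2 ⟨x, hx, if_pos rfl⟩
        refine sat_agree hM φ ?_ (hall (ν y) hy)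
        intro z hz
        by_cases hzx : z = x
        · subst hzx; simp [Function.update_self]
        · rw [Function.update_of_ne hzx]
          show ν z = ν (if z = x then y else z)
          rw [if_neg hzx]
      · obtain ⟨a, ha⟩ := hDne w
        refine sat_agree hM φ ?_ (hall a ha)
        intro z hz
        have hzx : z ≠ x := fun hc => hx (hc ▸ hz)
        rw [Function.update_of_ne hzx]
        show ν z = ν (if z = x then y else z)
        rw [if_neg hzx]
  | allImp x φ ψ =>
      refine ⟨hFV, fun h1 => ⟨fun z hz => hFV z ?_, fun h2 a ha => (h1 a ha).2 (h2 a ha)⟩⟩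
      simp only [Fm.FV, Finset.mem_union] at hz ⊢; tauto
  | allVac x φ hx =>
      refine ⟨hFV, fun hφ a ha => ?_⟩
      refine sat_agree hM φ ?_ hφ
      intro z hz
      have hzx : z ≠ x := fun hc => hx (hc ▸ hz)
      exact (Function.update_of_ne hzx a ν).symm
  | A1 t X y φ hy =>
      have hset : φ.FV \ insert y X = φ.FV \ X := by
        ext z
        simp only [Finset.mem_sdiff, Finset.mem_insert]
        constructor
        · rintro ⟨hz, h⟩; exact ⟨hz, fun hX => h (Or.inr hX)⟩
        · rintro ⟨hz, h⟩; exact ⟨hz, fun hc => hc.elim (fun he => hy (he ▸ hz)) h⟩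
      have hset2 : φ.FV ∩ insert y X = φ.FV ∩ X := by
        ext z
        simp only [Finset.mem_inter, Finset.mem_insert]
        constructor
        · rintro ⟨hz, h⟩; exact ⟨hz, h.elim (fun he => absurd (he ▸ hz) hy) id⟩
        · rintro ⟨hz, h⟩; exact ⟨hz, Or.inr h⟩
      refine ⟨hFV, fun h => ?_⟩
      obtain ⟨h1, h2, h3⟩ := h
      rw [hset] at h2
      rw [hset2] at h3
      exact ⟨fun x hx => h1 x (Finset.mem_insert_of_mem hx), h2, h3⟩
  | A1' X y φ hy =>
      have hset : φ.FV \ insert y X = φ.FV \ X := by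
        ext z
        simp only [Finset.mem_sdiff, Finset.mem_insert]
        constructor
        · rintro ⟨hz, h⟩; exact ⟨hz, fun hX => h (Or.inr hX)⟩
        · rintro ⟨hz, h⟩; exact ⟨hz, fun hc => hc.elim (fun he => hy (he ▸ hz)) h⟩
      refine ⟨hFV, fun h => ?_⟩
      obtain ⟨h1, h2⟩ := h
      rw [hset] at h2
      exact ⟨fun x hx => h1 x (Finset.mem_insert_of_mem hx), h2⟩
  | A2 t X y φ =>
      have hyD : ν y ∈ M.D w :=
        hFV y (Finset.mem_union_right _ (show y ∈ insert y X from Finset.mem_insert_self y X))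
      refine ⟨hFV, fun h => ?_⟩
      obtain ⟨h1, h2, h3⟩ := h
      have hsub : φ.FV \ insert y X ⊆ φ.FV \ X := by
        intro z hz
        rcases Finset.mem_sdiff.1 hz with ⟨hz1, hz2⟩
        exact Finset.mem_sdiff.2 ⟨hz1, fun hc => hz2 (Finset.mem_insert_of_mem hc)⟩
      refine ⟨?_, ?_, ?_⟩
      · intro x hx
        rcases Finset.mem_insert.1 hx with rfl | hx
        · exact hyD
        · exact h1 x hx
      · intro u hu μ hμ hμD
        refine h2 u hu μ (fun x hx => hμ x (fun hc => hx (hsub hc))) ?_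
        intro x hx
        by_cases hx2 : x ∈ φ.FV \ insert y X
        · exact hμD x hx2
        · have hxy : x = y := by
            rcases Finset.mem_sdiff.1 hx with ⟨ha, hb⟩
            by_contra hne
            exact hx2 (Finset.mem_sdiff.2 ⟨ha, fun hc =>
              (Finset.mem_insert.1 hc).elim hne hb⟩)
          rw [hμ x hx2, hxy]
          exact hmono w u hu hyD
      · refine evid_mono hM h3 ?_ (fun _ _ => rfl) ?_
        · exact Finset.inter_subset_inter le_rfl (Finset.subset_insert y X)
        · intro x hx
          rcases Finset.mem_inter.1 hx with ⟨hx1, hx2⟩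
          rcases Finset.mem_insert.1 hx2 with rfl | hx2
          · exact hyD
          · exact h1 x hx2
  | A2' X y φ =>
      have hyD : ν y ∈ M.D w :=
        hFV y (Finset.mem_union_right _ (show y ∈ insert y X from Finset.mem_insert_self y X))
      refine ⟨hFV, fun h => ?_⟩
      obtain ⟨h1, h2⟩ := h
      have hsub : φ.FV \ insert y X ⊆ φ.FV \ X := by
        intro z hz
        rcases Finset.mem_sdiff.1 hz with ⟨hz1, hz2⟩
        exact Finset.mem_sdiff.2 ⟨hz1, fun hc => hz2 (Finset.mem_insert_of_mem hc)⟩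
      refine ⟨?_, ?_⟩
      · intro x hx
        rcases Finset.mem_insert.1 hx with rfl | hx
        · exact hyD
        · exact h1 x hx
      · intro u hu μ hμ hμD
        refine h2 u hu μ (fun x hx => hμ x (fun hc => hx (hsub hc))) ?_
        intro x hx
        by_cases hx2 : x ∈ φ.FV \ insert y X
        · exact hμD x hx2
        · have hxy : x = y := by
            rcases Finset.mem_sdiff.1 hx with ⟨ha, hb⟩
            by_contra hne
            exact hx2 (Finset.mem_sdiff.2 ⟨ha, fun hc =>
              (Finset.mem_insert.1 hc).elim hne hb⟩)
          rw [hμ x hx2, hxy]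
          exact hmono w u hu hyD
  | A3 t X φ =>
      refine ⟨hFV, fun h => ?_⟩
      refine h.2.1 w (hrefl w) ν (fun _ _ => rfl) ?_
      intro x hx
      exact hFV x (Finset.mem_union_right _ (Finset.mem_sdiff.1 hx).1)
  | A3' X φ =>
      refine ⟨hFV, fun h => ?_⟩
      refine h.2 w (hrefl w) ν (fun _ _ => rfl) ?_
      intro x hx
      exact hFV x (Finset.mem_union_right _ (Finset.mem_sdiff.1 hx).1)
  | A4 t s X φ ψ =>
      refine ⟨hFV, fun hT => ⟨fun x hx => hFV x ?_, fun hS => ?_⟩⟩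
      · simp only [Fm.FV, Finset.mem_union] at hx ⊢; tauto
      obtain ⟨hT1, hT2, hT3⟩ := hT
      obtain ⟨hS1, hS2, hS3⟩ := hS
      refine ⟨hT1, ?_, ?_⟩
      · intro u hu μ hμ hμD
        obtain ⟨d, hd⟩ := hDne u
        set ρ : ℕ → Obj := fun z => if z ∈ ψ.FV \ X then μ z
          else if z ∈ φ.FV \ X then d else ν z with hρdef
        have hρν : ∀ z, z ∉ (φ.imp ψ).FV \ X → ρ z = ν z := by
          intro z hz
          have hz1 : z ∉ ψ.FV \ X := fun hc => hz (by
            rcases Finset.mem_sdiff.1 hc with ⟨ha, hb⟩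
            exact Finset.mem_sdiff.2 ⟨Finset.mem_union_right _ ha, hb⟩)
          have hz2 : z ∉ φ.FV \ X := fun hc => hz (by
            rcases Finset.mem_sdiff.1 hc with ⟨ha, hb⟩
            exact Finset.mem_sdiff.2 ⟨Finset.mem_union_left _ ha, hb⟩)
          rw [hρdef]
          simp only [if_neg hz1, if_neg hz2]
        have hρD : ∀ z ∈ (φ.imp ψ).FV \ X, ρ z ∈ M.D u := by
          intro z hz
          rcases Finset.mem_sdiff.1 hz with ⟨ha, hb⟩
          rw [hρdef]
          by_cases h1 : z ∈ ψ.FV \ X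
          · simp only [if_pos h1]; exact hμD z h1
          · simp only [if_neg h1]
            have h2 : z ∈ φ.FV \ X := by
              rcases Finset.mem_union.1 ha with hc | hc
              · exact Finset.mem_sdiff.2 ⟨hc, hb⟩
              · exact absurd (Finset.mem_sdiff.2 ⟨hc, hb⟩) h1
            simp only [if_pos h2]; exact hd
        have hρimp : Sat M (φ.imp ψ) ρ u := hT2 u hu ρ hρν hρD
        have hρφ : Sat M φ ρ u := by
          have hs2 : Sat M φ (fun z => if z ∈ φ.FV \ X then ρ z else ν z) u := by
            refine hS2 u hu _ (fun z hz => if_neg hz) ?_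
            intro z hz
            show (if z ∈ φ.FV \ X then ρ z else ν z) ∈ M.D u
            rw [if_pos hz]
            exact hρD z (by
              rcases Finset.mem_sdiff.1 hz with ⟨ha, hb⟩
              exact Finset.mem_sdiff.2 ⟨Finset.mem_union_left _ ha, hb⟩)
          refine sat_agree hM φ ?_ hs2
          intro z hz
          by_cases hz1 : z ∈ φ.FV \ X
          · show (if z ∈ φ.FV \ X then ρ z else ν z) = ρ z
            rw [if_pos hz1]
          · show (if z ∈ φ.FV \ X then ρ z else ν z) = ρ z
            rw [if_neg hz1]
            refine (hρν z ?_).symm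
            intro hc
            rcases Finset.mem_sdiff.1 hc with ⟨ha, hb⟩
            rcases Finset.mem_union.1 ha with hc2 | hc2
            · exact hz1 (Finset.mem_sdiff.2 ⟨hc2, hb⟩)
            · exact hz1 (Finset.mem_sdiff.2 ⟨hz, hb⟩)
        have hρψ : Sat M ψ ρ u := hρimp.2 hρφ
        refine sat_agree hM ψ ?_ hρψ
        intro z hz
        by_cases hz1 : z ∈ ψ.FV \ X
        · rw [hρdef]; simp only [if_pos hz1]
        · rw [hρdef]
          simp only [if_neg hz1]
          have hz2 : z ∉ φ.FV \ X := by
            intro hc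
            rcases Finset.mem_sdiff.1 hc with ⟨_, hb⟩
            exact hz1 (Finset.mem_sdiff.2 ⟨hz, hb⟩)
          simp only [if_neg hz2]
          exact (hμ z hz1).symm
      · have hS3' : w ∈ M.E s φ (FinVal.ofFun ν ((φ.FV ∪ ψ.FV) ∩ X)) := by
          refine evid_mono hM hS3 ?_ (fun _ _ => rfl) ?_
          · exact Finset.inter_subset_inter Finset.subset_union_left le_rfl
          · intro x hx
            exact hT1 x (Finset.mem_inter.1 hx).2
        have happ' := happ t s φ ψ (FinVal.ofFun ν ((φ.FV ∪ ψ.FV) ∩ X)) ⟨hT3, hS3'⟩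
        have hres := hE.2.2.2.2.1 (t.app s) ψ (FinVal.ofFun ν ((φ.FV ∪ ψ.FV) ∩ X)) happ'
        refine (evid_congr hM
          (f := (FinVal.ofFun ν ((φ.FV ∪ ψ.FV) ∩ X)).restrict ψ.FV)
          (g := FinVal.ofFun ν (ψ.FV ∩ X)) ?_ (fun _ _ => rfl)).1 hres
        show (φ.FV ∪ ψ.FV) ∩ X ∩ ψ.FV = ψ.FV ∩ X
        ext z
        simp only [Finset.mem_inter, Finset.mem_union]
        tauto
  | A4' X φ ψ =>
      refine ⟨hFV, fun hT => ⟨fun x hx => hFV x ?_, fun hS => ?_⟩⟩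
      · simp only [Fm.FV, Finset.mem_union] at hx ⊢; tauto
      obtain ⟨hT1, hT2⟩ := hT
      obtain ⟨hS1, hS2⟩ := hS
      refine ⟨hT1, ?_⟩
      intro u hu μ hμ hμD
      obtain ⟨d, hd⟩ := hDne u
      set ρ : ℕ → Obj := fun z => if z ∈ ψ.FV \ X then μ z
        else if z ∈ φ.FV \ X then d else ν z with hρdef
      have hρν : ∀ z, z ∉ (φ.imp ψ).FV \ X → ρ z = ν z := by
        intro z hz
        have hz1 : z ∉ ψ.FV \ X := fun hc => hz (by
          rcases Finset.mem_sdiff.1 hc with ⟨ha, hb⟩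
          exact Finset.mem_sdiff.2 ⟨Finset.mem_union_right _ ha, hb⟩)
        have hz2 : z ∉ φ.FV \ X := fun hc => hz (by
          rcases Finset.mem_sdiff.1 hc with ⟨ha, hb⟩
          exact Finset.mem_sdiff.2 ⟨Finset.mem_union_left _ ha, hb⟩)
        rw [hρdef]
        simp only [if_neg hz1, if_neg hz2]
      have hρD : ∀ z ∈ (φ.imp ψ).FV \ X, ρ z ∈ M.D u := by
        intro z hz
        rcases Finset.mem_sdiff.1 hz with ⟨ha, hb⟩
        rw [hρdef]
        by_cases h1 : z ∈ ψ.FV \ X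
        · simp only [if_pos h1]; exact hμD z h1
        · simp only [if_neg h1]
          have h2 : z ∈ φ.FV \ X := by
            rcases Finset.mem_union.1 ha with hc | hc
            · exact Finset.mem_sdiff.2 ⟨hc, hb⟩
            · exact absurd (Finset.mem_sdiff.2 ⟨hc, hb⟩) h1
          simp only [if_pos h2]; exact hd
      have hρimp : Sat M (φ.imp ψ) ρ u := hT2 u hu ρ hρν hρD
      have hρφ : Sat M φ ρ u := by
        have hs2 : Sat M φ (fun z => if z ∈ φ.FV \ X then ρ z else ν z) u := by
          refine hS2 u hu _ (fun z hz => if_neg hz) ?_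
          intro z hz
          show (if z ∈ φ.FV \ X then ρ z else ν z) ∈ M.D u
          rw [if_pos hz]
          exact hρD z (by
            rcases Finset.mem_sdiff.1 hz with ⟨ha, hb⟩
            exact Finset.mem_sdiff.2 ⟨Finset.mem_union_left _ ha, hb⟩)
        refine sat_agree hM φ ?_ hs2
        intro z hz
        by_cases hz1 : z ∈ φ.FV \ X
        · show (if z ∈ φ.FV \ X then ρ z else ν z) = ρ z
          rw [if_pos hz1]
        · show (if z ∈ φ.FV \ X then ρ z else ν z) = ρ z
          rw [if_neg hz1]
          refine (hρν z ?_).symm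
          intro hc
          rcases Finset.mem_sdiff.1 hc with ⟨ha, hb⟩
          rcases Finset.mem_union.1 ha with hc2 | hc2
          · exact hz1 (Finset.mem_sdiff.2 ⟨hc2, hb⟩)
          · exact hz1 (Finset.mem_sdiff.2 ⟨hz, hb⟩)
      have hρψ : Sat M ψ ρ u := hρimp.2 hρφ
      refine sat_agree hM ψ ?_ hρψ
      intro z hz
      by_cases hz1 : z ∈ ψ.FV \ X
      · rw [hρdef]; simp only [if_pos hz1]
      · rw [hρdef]
        simp only [if_neg hz1]
        have hz2 : z ∉ φ.FV \ X := by
          intro hc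
          rcases Finset.mem_sdiff.1 hc with ⟨_, hb⟩
          exact hz1 (Finset.mem_sdiff.2 ⟨hz, hb⟩)
        simp only [if_neg hz2]
        exact (hμ z hz1).symm
  | A5l t s X φ =>
      exact ⟨hFV, fun h => ⟨h.1, h.2.1, hplus t s φ _ (Set.mem_union_left _ h.2.2)⟩⟩
  | A5r t s X φ =>
      exact ⟨hFV, fun h => ⟨h.1, h.2.1, hplus t s φ _ (Set.mem_union_right _ h.2.2)⟩⟩
  | A6 t X φ =>
      refine ⟨hFV, fun h => ?_⟩
      obtain ⟨h1, h2, h3⟩ := h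
      refine ⟨h1, ?_, ?_⟩
      · intro u hu μ hμ hμD
        have hμν : ∀ x, μ x = ν x := fun x => hμ x (by simp [Fm.FV])
        have hsat : Sat M (Fm.just t X φ) ν u :=
          ⟨fun x hx => hmono w u hu (h1 x hx),
           fun v huv ρ hρ hρD => h2 v (htrans w u v hu huv) ρ hρ hρD,
           hRcl t φ _ w u hu h3⟩
        exact sat_agree hM (Fm.just t X φ) (fun x _ => (hμν x).symm) hsat
      · refine hbang t φ (FinVal.ofFun ν (φ.FV ∩ X)) (FinVal.ofFun ν (X ∩ X)) X w h3
          ⟨?_, fun _ _ => rfl⟩ ?_ ?_ ?_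
        · intro x hx
          exact Finset.mem_inter.2 ⟨(Finset.mem_inter.1 hx).2, (Finset.mem_inter.1 hx).2⟩
        · rintro _ ⟨x, hx, rfl⟩
          exact h1 x (Finset.mem_inter.1 (by exact_mod_cast hx)).1
        · intro x hx
          exact (Finset.mem_inter.1 (Finset.mem_inter.1 hx).1).2
        · intro x hx
          exact Finset.mem_inter.2 ⟨hx, hx⟩
  | A6' X φ =>
      refine ⟨hFV, fun h => ?_⟩
      obtain ⟨h1, h2⟩ := h
      refine ⟨h1, ?_⟩
      intro u hu μ hμ hμD
      have hμν : ∀ x, μ x = ν x := fun x => hμ x (by simp [Fm.FV])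
      have hsat : Sat M (Fm.box X φ) ν u :=
        ⟨fun x hx => hmono w u hu (h1 x hx),
         fun v huv ρ hρ hρD => h2 v (htrans w u v hu huv) ρ hρ hρD⟩
      exact sat_agree hM (Fm.box X φ) (fun x _ => (hμν x).symm) hsat
  | A7 t X x φ hx =>
      refine ⟨hFV, fun h => ?_⟩
      obtain ⟨h1, h2, h3⟩ := h
      refine ⟨h1, ?_, ?_⟩
      · intro u hu μ hμ hμD a ha
        have hs : Sat M φ
            (fun z => if z ∈ φ.FV \ X then Function.update μ x a z else ν z) u := by
          refine h2 u hu _ (fun z hz => if_neg hz) ?_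
          intro z hz
          show (if z ∈ φ.FV \ X then Function.update μ x a z else ν z) ∈ M.D u
          rw [if_pos hz]
          by_cases hzx : z = x
          · subst hzx; rw [Function.update_self]; exact ha
          · rw [Function.update_of_ne hzx]
            refine hμD z ?_
            rcases Finset.mem_sdiff.1 hz with ⟨ha2, hb2⟩
            exact Finset.mem_sdiff.2 ⟨Finset.mem_erase.2 ⟨hzx, ha2⟩, hb2⟩
        refine sat_agree hM φ ?_ hs
        intro z hz
        by_cases hz1 : z ∈ φ.FV \ X
        · show (if z ∈ φ.FV \ X then Function.update μ x a z else ν z) = _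
          rw [if_pos hz1]
        · show (if z ∈ φ.FV \ X then Function.update μ x a z else ν z) = _
          rw [if_neg hz1]
          have hzX : z ∈ X := by
            by_contra hc
            exact hz1 (Finset.mem_sdiff.2 ⟨hz, hc⟩)
          have hzx : z ≠ x := fun hc => hx (hc ▸ hzX)
          rw [Function.update_of_ne hzx]
          refine (hμ z ?_).symm
          intro hc
          exact (Finset.mem_sdiff.1 hc).2 hzX
      · have hg := hgen t φ (FinVal.ofFun ν (φ.FV ∩ X)) x
          (by
            intro hc
            exact hx (Finset.mem_inter.1 (Finset.mem_inter.1 hc).1).2) h3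
        refine (evid_congr hM (f := FinVal.ofFun ν (φ.FV ∩ X))
          (g := FinVal.ofFun ν ((Fm.all x φ).FV ∩ X)) ?_ (fun _ _ => rfl)).1 hg
        show φ.FV ∩ X = φ.FV.erase x ∩ X
        ext z
        simp only [Finset.mem_inter, Finset.mem_erase]
        constructor
        · rintro ⟨ha, hb⟩
          exact ⟨⟨fun hc => hx (hc ▸ hb), ha⟩, hb⟩
        · rintro ⟨⟨_, ha⟩, hb⟩
          exact ⟨ha, hb⟩
  | A7' X x φ hx =>
      refine ⟨hFV, fun h => ?_⟩
      obtain ⟨h1, h2⟩ := h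
      refine ⟨h1, ?_⟩
      intro u hu μ hμ hμD a ha
      have hs : Sat M φ
          (fun z => if z ∈ φ.FV \ X then Function.update μ x a z else ν z) u := by
        refine h2 u hu _ (fun z hz => if_neg hz) ?_
        intro z hz
        show (if z ∈ φ.FV \ X then Function.update μ x a z else ν z) ∈ M.D u
        rw [if_pos hz]
        by_cases hzx : z = x
        · subst hzx; rw [Function.update_self]; exact ha
        · rw [Function.update_of_ne hzx]
          refine hμD z ?_
          rcases Finset.mem_sdiff.1 hz with ⟨ha2, hb2⟩
          exact Finset.mem_sdiff.2 ⟨Finset.mem_erase.2 ⟨hzx, ha2⟩, hb2⟩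
      refine sat_agree hM φ ?_ hs
      intro z hz
      by_cases hz1 : z ∈ φ.FV \ X
      · show (if z ∈ φ.FV \ X then Function.update μ x a z else ν z) = _
        rw [if_pos hz1]
      · show (if z ∈ φ.FV \ X then Function.update μ x a z else ν z) = _
        rw [if_neg hz1]
        have hzX : z ∈ X := by
          by_contra hc
          exact hz1 (Finset.mem_sdiff.2 ⟨hz, hc⟩)
        have hzx : z ≠ x := fun hc => hx (hc ▸ hzX)
        rw [Function.update_of_ne hzx]
        refine (hμ z ?_).symm
        intro hc
        exact (Finset.mem_sdiff.1 hc).2 hzX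
  | A8 t X φ =>
      exact ⟨hFV, fun h => ⟨h.1, h.2.1⟩⟩

end SoundnessAux

/-- Soundness of FOLP□_CS with respect to Fitting models meeting
`CS`: if `Γ ⊢_CS Φ` then `Γ ⊨_CS Φ`. -/
theorem soundness (CS : Set Fm) (hCS : IsCS CS) (Γ : Set Fm) (Φ : Fm)
    (h : Deriv CS ∅ Γ Φ) :
    ∀ (Obj : Type) (M : PreModel Obj), IsFitting M → MeetsCS M CS →
      ∀ (ν : ℕ → Obj) (w : M.W), (∀ ψ ∈ Γ, Sat M ψ ν w) →
        (∀ x ∈ Φ.FV, ν x ∈ M.D w) → Sat M Φ ν w := by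
  intro Obj M hM hCSM
  induction h with
  | hyp hmem => exact fun ν w hΓ _ => hΓ _ hmem
  | ax hA => exact fun ν w _ hFV => axiom_sound hM hA ν w hFV
  | cs hmem =>
      intro ν w _ _
      obtain ⟨c, ψ, heq, hψ⟩ := hCS _ hmem
      subst heq
      refine ⟨fun x hx => absurd hx (Finset.notMem_empty x), ?_, ?_⟩
      · intro u hu μ hμ hμD
        exact axiom_sound hM hψ μ u
          (fun x hx => hμD x (Finset.mem_sdiff.2 ⟨hx, Finset.notMem_empty x⟩))
      · have := hCSM c ψ hmem (FinVal.ofFun ν (ψ.FV ∩ ∅)) (Finset.inter_empty _)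
        rw [this]
        trivial
  | @mp Γ' φ ψ hd1 hd2 ih1 ih2 =>
      intro ν w hΓ hFV
      classical
      obtain ⟨d, hd⟩ := hM.2.2.2.1 w
      set ν' : ℕ → Obj := fun x => if ν x ∈ M.D w then ν x else d with hν'def
      have hν'D : ∀ x, ν' x ∈ M.D w := by
        intro x
        rw [hν'def]
        by_cases h : ν x ∈ M.D w
        · simp [h]
        · simpa [h] using hd
      have hagree : ∀ (χ : Fm), Sat M χ ν w → Sat M χ ν' w := by
        intro χ hs
        refine sat_agree hM χ (fun x hx => ?_) hs
        have := sat_fv hM χ ν w hs x hx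
        rw [hν'def]
        simp [this]
      have hΓ' : ∀ χ ∈ Γ', Sat M χ ν' w := fun χ h => hagree χ (hΓ χ h)
      have h1 := ih1 ν' w hΓ' (fun x _ => hν'D x)
      have h2 := ih2 ν' w hΓ' (fun x _ => hν'D x)
      have h3 : Sat M ψ ν' w := h1.2 h2
      refine sat_agree hM ψ (fun x hx => ?_) h3
      rw [hν'def]
      simp [hFV x hx]
  | @gen Γ' φ x hxV hxΓ hd ih =>
      intro ν w hΓ hFV a ha
      refine ih (Function.update ν x a) w ?_ ?_
      · intro χ hχ
        refine sat_agree hM χ (fun z hz => ?_) (hΓ χ hχ)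
        have hzx : z ≠ x := fun hc => hxΓ χ hχ (hc ▸ hz)
        exact (Function.update_of_ne hzx a ν).symm
      · intro z hz
        by_cases hzx : z = x
        · subst hzx; rw [Function.update_self]; exact ha
        · rw [Function.update_of_ne hzx]
          exact hFV z (Finset.mem_erase.2 ⟨hzx, hz⟩)
  | @nec Γ' φ hd ih =>
      intro ν w _ _
      refine ⟨fun x hx => absurd hx (Finset.notMem_empty x), ?_⟩
      intro u hu μ hμ hμD
      refine ih μ u (fun χ hχ => absurd hχ (Set.notMem_empty χ)) ?_
      intro x hx
      exact hμD x (Finset.mem_sdiff.2 ⟨hx, Finset.notMem_empty x⟩)
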